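/- Let G be a connected multigraph with p = |V(G)| vertices and q = |E(G)| edges, and for each edge a of G with endpoints u_a, v_a let K_a be a connected multigraph with two distinguished distinct vertices ū_a, v̄_a. Let G̃ be the multigraph obtained from G by replacing each edge a by K_a: the edge set of G̃ is the disjoint union of the edge sets of the K_a, and the vertex set is obtained from V(G) together with the disjoint union of the sets V(K_a)∖{ū_a, v̄_a} by attaching each K_a via the identifications ū_a = u_a and v̄_a = v_a (so that distinct K_a meet only in vertices of G, and K_a meets G only in u_a, v_a). Let K′_a be the multigraph obtained from K_a by identifying ū_a and v̄_a. Fix a nonzero complex number A with σ = A + 1 + A^{−1} ≠ 0, and set α_a = ((σ+1)·H(K_a)(A) + H(K′_a)(A))/σ, β_a = (H(K_a)(A) + H(K′_a)(A))/σ, and, assuming β_a ≠ 0 for every edge a, γ_a = 1 − α_a/β_a. Then H(G̃)(A) = (−1)^{p−q} · (Π_{a∈E(G)} β_a) · Ch(G), where Ch(G) is the chain polynomial of G with edge a labelled by γ_a, evaluated at w = −σ. -/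

import Mathlib

/-- A multigraph: a finite vertex set `V`, a finite edge set `E`, and a map assigning
to each edge an unordered pair of (not necessarily distinct) endpoints in `V`;
loops and multiple edges are allowed. -/
structure Multigraph where
  V : Type
  E : Type
  [finV : Finite V]
  [fintypeE : Fintype E]
  [decE : DecidableEq E]
  ends : E → Sym2 V

attribute [instance] Multigraph.finV Multigraph.fintypeE Multigraph.decE

namespace Multigraph

/-- `μ`: the number of connected components of the spanning subgraph of `G`
with edge set `S`. -/
noncomputable def mu (G : Multigraph) (S : Finset G.E) : ℕ :=
  Nat.card (Quot (fun x y : G.V => ∃ e ∈ S, G.ends e = s(x, y)))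

/-- `β`: the first Betti number `|S| − |V| + μ` of the spanning subgraph of `G`
with edge set `S`. -/
noncomputable def betti (G : Multigraph) (S : Finset G.E) : ℕ :=
  S.card + G.mu S - Nat.card G.V

/-- The Yamada polynomial of `G` evaluated at a nonzero complex number `A`:
`H(G)(A) = Σ_{F ⊆ E(G)} (−1)^{|F| + μ(G−F)} (−A − 2 − A⁻¹)^{β(G−F)}`. -/
noncomputable def yamada (G : Multigraph) (A : ℂ) : ℂ :=
  ∑ F : Finset G.E, (-1 : ℂ) ^ (F.card + G.mu Fᶜ) * (-A - 2 - A⁻¹) ^ (G.betti Fᶜ)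

/-- `G` is connected: the whole graph has exactly one connected component. -/
def Connected (G : Multigraph) : Prop := G.mu Finset.univ = 1

end Multigraph

namespace Multigraph

/-- The chain polynomial of a multigraph `G` with edge labels `ℓ`, evaluated at `w`:
`Ch(G) = Σ_{Y ⊆ E} F_{G−Y}(1−w) · Π_{a∈Y} ℓ(a)`, where
`F_{G−Y}(t) = Σ_{S ⊆ E∖Y} (−1)^{|(E∖Y)∖S|} t^{β(S)}` is the flow polynomial of the
spanning subgraph `G − Y` evaluated at `t = 1 − w`. -/
noncomputable def chain {R : Type*} [CommRing R] (G : Multigraph) (ℓ : G.E → R) (w : R) : R :=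
  ∑ Y : Finset G.E,
    (∑ S ∈ Yᶜ.powerset, (-1 : R) ^ (Yᶜ.card - S.card) * (1 - w) ^ G.betti S) *
      ∏ a ∈ Y, ℓ a

/-- The multigraph obtained from `G` by identifying the vertices `u` and `v`
(keeping all edges). -/
def identify (G : Multigraph) (u v : G.V) : Multigraph where
  V := Quot (fun x y : G.V => x = u ∧ y = v)
  E := G.E
  ends := fun e => (G.ends e).map (Quot.mk _)

/-- The multigraph `G̃` obtained from `G` by replacing each edge `a` (with endpoints
`u a`, `v a`) by the multigraph `K a` with distinguished vertices `ub a`, `vb a`: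
the edge set is the disjoint union of the edge sets of the `K a`, and the vertex set
is obtained from `V(G)` together with the disjoint union of the `V(K a)` by
identifying `ub a` with `u a` and `vb a` with `v a`, so that distinct `K a` meet only
in vertices of `G` and `K a` meets `G` only in `u a`, `v a`. -/
def replaceEdges (G : Multigraph) (K : G.E → Multigraph)
    (u v : G.E → G.V) (ub vb : (a : G.E) → (K a).V) : Multigraph where
  V := Quot (fun x y : G.V ⊕ (Σ a : G.E, (K a).V) =>
    ∃ a : G.E, (x = Sum.inl (u a) ∧ y = Sum.inr ⟨a, ub a⟩) ∨
               (x = Sum.inl (v a) ∧ y = Sum.inr ⟨a, vb a⟩))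
  E := Σ a : G.E, (K a).E
  ends := fun e => ((K e.1).ends e.2).map (fun x => Quot.mk _ (Sum.inr ⟨e.1, x⟩))

end Multigraph

/-!
A state of `G̃` (a set `F` of deleted edges) is a family of states `F_a` of the blocks `K_a`.
Gluing the blocks onto `V(G)` shows that the components of `G̃ − F` are those of `G : S`,
where `S` is the set of edges `a` whose block `K_a − F_a` joins `ū_a` to `v̄_a`, together with
the components of the blocks that avoid `ū_a` and `v̄_a`. Hence `β(G̃ − F) = β(G : S) + Σ β(K_a − F_a)`
and the sign of the state is that of `G : S` times those of the blocks, up to `(-1)^|S|`, so the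
sum over the states with a given `S` factorises: each block contributes the total weight `T_a` of
its states joining `ū_a` and `v̄_a`, or the total weight `N_a` of the others. Identifying `ū_a`
with `v̄_a` multiplies the weight of a joining state by `t = −A − 2 − A⁻¹` and negates the others,
so `H(K_a) = T_a + N_a` and `H(K′_a) = t T_a − N_a`, i.e. `T_a = −β_a` and `N_a = α_a`.
Expanding the flow polynomials by inclusion–exclusion turns `Ch(G)` into
`Σ_S (1 + σ)^{β(G : S)} Π_{a ∉ S} (γ_a − 1)`, and `β_a (γ_a − 1) = −α_a` matches the two sums term
by term.
-/

open Finset Relation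

section Quotients

variable {X : Type*}

theorem Quot.card_eq_of_eqvGen {r s : X → X → Prop}
    (hrs : ∀ x y, r x y → EqvGen s x y) (hsr : ∀ x y, s x y → EqvGen r x y) :
    Nat.card (Quot r) = Nat.card (Quot s) :=
  Nat.card_congr
    { toFun := Quot.lift (Quot.mk s) fun x y h => Quot.eqvGen_sound (hrs x y h)
      invFun := Quot.lift (Quot.mk r) fun x y h => Quot.eqvGen_sound (hsr x y h)
      left_inv := by rintro ⟨x⟩; rfl
      right_inv := by rintro ⟨x⟩; rfl }

theorem Quot.card_eq_of_forall_eq {r : X → X → Prop} (h : ∀ x y, r x y → x = y) :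
    Nat.card (Quot r) = Nat.card X :=
  Nat.card_congr
    { toFun := Quot.lift id h
      invFun := Quot.mk r
      left_inv := by rintro ⟨x⟩; rfl
      right_inv := fun _ => rfl }

def Quot.quotEquivQuotOr (ρ r : X → X → Prop) (s : Quot ρ → Quot ρ → Prop)
    (hs : ∀ c d, s c d ↔ ∃ x y, r x y ∧ Quot.mk ρ x = c ∧ Quot.mk ρ y = d) :
    Quot s ≃ Quot fun x y => ρ x y ∨ r x y where
  toFun := Quot.lift (Quot.lift (Quot.mk _) fun _ _ h => Quot.sound (.inl h)) fun c d h => by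
    obtain ⟨x, y, hr, rfl, rfl⟩ := (hs c d).1 h
    exact Quot.sound (.inr hr)
  invFun := Quot.lift (fun x => Quot.mk s (Quot.mk ρ x)) fun x y => by
    rintro (h | h)
    · rw [Quot.sound h]
    · exact Quot.sound ((hs _ _).2 ⟨x, y, h, rfl, rfl⟩)
  left_inv := by rintro ⟨⟨x⟩⟩; rfl
  right_inv := by rintro ⟨x⟩; rfl

theorem Quot.card_pair_add_one [Finite X] {a b : X} (hab : a ≠ b) :
    Nat.card (Quot fun x y : X => x = a ∧ y = b) + 1 = Nat.card X := by
  classical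
  have e : (Quot fun x y : X => x = a ∧ y = b) ≃ {x : X // x ≠ b} :=
    { toFun := Quot.lift (fun x => if h : x = b then ⟨a, hab⟩ else ⟨x, h⟩) (by
        rintro x y ⟨rfl, rfl⟩
        simp [hab])
      invFun := fun x => Quot.mk _ x
      left_inv := by
        rintro ⟨x⟩
        by_cases h : x = b
        · simpa [h] using (Quot.sound ⟨rfl, rfl⟩ : Quot.mk (fun x y : X => x = a ∧ y = b) a = _)
        · simp [h]
      right_inv := by rintro ⟨x, hx⟩; simp [hx] }
  have := Fintype.ofFinite X
  rw [Nat.card_congr e, Nat.card_eq_fintype_card, Nat.card_eq_fintype_card, Fintype.card_subtype_compl,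
    Fintype.card_subtype_eq]
  have := Fintype.card_pos_iff.2 ⟨a⟩
  omega

theorem Quot.card_or_pair_eq_card_quot_pair (r : X → X → Prop) (a b : X) :
    Nat.card (Quot fun x y => (x = a ∧ y = b) ∨ r x y) =
      Nat.card (Quot fun c d : Quot r => c = Quot.mk r a ∧ d = Quot.mk r b) := by
  rw [Quot.card_eq_of_eqvGen (s := fun x y => r x y ∨ (x = a ∧ y = b))
    (fun _ _ h => .rel _ _ h.symm) (fun _ _ h => .rel _ _ h.symm)]
  refine (Nat.card_congr (Quot.quotEquivQuotOr r _ _ fun c d => ?_)).symm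
  constructor
  · rintro ⟨rfl, rfl⟩
    exact ⟨a, b, ⟨rfl, rfl⟩, rfl, rfl⟩
  · rintro ⟨x, y, ⟨rfl, rfl⟩, rfl, rfl⟩
    exact ⟨rfl, rfl⟩

theorem Quot.card_or_pair_of_mk_eq {r : X → X → Prop} {a b : X}
    (h : Quot.mk r a = Quot.mk r b) :
    Nat.card (Quot fun x y => (x = a ∧ y = b) ∨ r x y) = Nat.card (Quot r) := by
  rw [Quot.card_or_pair_eq_card_quot_pair]
  exact Quot.card_eq_of_forall_eq (by rintro _ _ ⟨rfl, rfl⟩; exact h)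

theorem Quot.card_or_pair_of_mk_ne [Finite X] {r : X → X → Prop} {a b : X}
    (h : Quot.mk r a ≠ Quot.mk r b) :
    Nat.card (Quot fun x y => (x = a ∧ y = b) ∨ r x y) + 1 = Nat.card (Quot r) := by
  rw [Quot.card_or_pair_eq_card_quot_pair]
  exact Quot.card_pair_add_one h

end Quotients

open Classical in
theorem Nat.card_ne_and_ne_add_two {C : Type*} [Finite C] (p q : C) :
    Nat.card {c : C // c ≠ p ∧ c ≠ q} + 2 = Nat.card C + if p = q then 1 else 0 := by
  have := Fintype.ofFinite C
  have e : {c : C // c ≠ p ∧ c ≠ q} ≃ {c : C // c ∉ ({p, q} : Finset C)} :=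
    Equiv.subtypeEquivRight fun c => by simp
  rw [Nat.card_congr e, Nat.card_eq_fintype_card, Nat.card_eq_fintype_card,
    Fintype.card_subtype_compl, Fintype.card_coe]
  have := Finset.card_le_univ ({p, q} : Finset C)
  split_ifs with h
  · simp only [h, Finset.mem_singleton, Finset.insert_eq_of_mem, Finset.card_singleton] at this ⊢
    omega
  · rw [Finset.card_pair h] at this ⊢
    omega

section Gluing

variable {ι X : Type*} {C : ι → Type*} (u v : ι → X) (p q : ∀ i, C i)

/-- `(G.replaceEdges K u v ub vb).V` is `Quot (GlueRel u v ub vb)` by definition. -/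
def GlueRel (x y : X ⊕ Σ i, C i) : Prop :=
  ∃ i, (x = .inl (u i) ∧ y = .inr ⟨i, p i⟩) ∨ (x = .inl (v i) ∧ y = .inr ⟨i, q i⟩)

/-- The identifications that gluing forces among the points of `X`. -/
def PinchRel (x y : X) : Prop :=
  ∃ i, p i = q i ∧ s(u i, v i) = s(x, y)

theorem glueRel_mk_inl_eq_of_pinchRel {x y : X} (h : PinchRel u v p q x y) :
    Quot.mk (GlueRel u v p q) (.inl x) = Quot.mk _ (.inl y) := by
  obtain ⟨i, hpq, hxy⟩ := h
  have huv : Quot.mk (GlueRel u v p q) (.inl (u i)) = Quot.mk _ (.inl (v i)) :=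
    calc Quot.mk (GlueRel u v p q) (.inl (u i)) = Quot.mk _ (.inr ⟨i, p i⟩) :=
          Quot.sound ⟨i, .inl ⟨rfl, rfl⟩⟩
      _ = Quot.mk _ (.inr ⟨i, q i⟩) := by rw [hpq]
      _ = Quot.mk _ (.inl (v i)) := (Quot.sound ⟨i, .inr ⟨rfl, rfl⟩⟩).symm
  rcases Sym2.eq_iff.1 hxy with ⟨rfl, rfl⟩ | ⟨rfl, rfl⟩
  exacts [huv, huv.symm]

open Classical in
noncomputable def glueEquiv :
    Quot (GlueRel u v p q) ≃ Quot (PinchRel u v p q) ⊕ Σ i, {c : C i // c ≠ p i ∧ c ≠ q i} where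
  toFun := Quot.lift
    (fun
      | .inl x => .inl (Quot.mk _ x)
      | .inr ⟨i, c⟩ =>
        if hp : c = p i then .inl (Quot.mk _ (u i))
        else if hq : c = q i then .inl (Quot.mk _ (v i)) else .inr ⟨i, c, hp, hq⟩)
    (by
      rintro _ _ ⟨i, ⟨rfl, rfl⟩ | ⟨rfl, rfl⟩⟩
      · simp
      · by_cases h : q i = p i
        · simpa [h] using Quot.sound ⟨i, h.symm, Sym2.eq_swap⟩
        · simp [h])
  invFun
    | .inl c => Quot.lift (fun x => Quot.mk _ (.inl x))
        (fun _ _ h => glueRel_mk_inl_eq_of_pinchRel u v p q h) c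
    | .inr ⟨i, c, _⟩ => Quot.mk _ (.inr ⟨i, c⟩)
  left_inv := by
    rintro ⟨x | ⟨i, c⟩⟩
    · rfl
    · by_cases hp : c = p i
      · subst hp
        simpa using (Quot.sound ⟨i, .inl ⟨rfl, rfl⟩⟩ : Quot.mk (GlueRel u v p q) _ = _)
      by_cases hq : c = q i
      · subst hq
        simpa [hp] using (Quot.sound ⟨i, .inr ⟨rfl, rfl⟩⟩ : Quot.mk (GlueRel u v p q) _ = _)
      · simp [hp, hq]
  right_inv := by
    rintro (x | ⟨i, c, hp, hq⟩)
    · induction x using Quot.ind; rfl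
    · simp [hp, hq]

open Classical in
theorem card_quot_glueRel [Fintype ι] [Finite X] [∀ i, Finite (C i)] :
    Nat.card (Quot (GlueRel u v p q)) + 2 * Fintype.card ι =
      Nat.card (Quot (PinchRel u v p q)) + ∑ i, (Nat.card (C i) + if p i = q i then 1 else 0) := by
  rw [Nat.card_congr (glueEquiv u v p q), Nat.card_sum, Nat.card_sigma, add_assoc,
    ← Finset.card_univ, mul_comm, ← smul_eq_mul, ← Finset.sum_const, ← Finset.sum_add_distrib]
  simp only [Nat.card_ne_and_ne_add_two]

def SigmaRel (r : ∀ i, C i → C i → Prop) (x y : X ⊕ Σ i, C i) : Prop :=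
  ∃ i a b, r i a b ∧ .inr ⟨i, a⟩ = x ∧ .inr ⟨i, b⟩ = y

def glueQuotEquiv (r : ∀ i, C i → C i → Prop) :
    Quot (fun x y => GlueRel u v p q x y ∨ SigmaRel r x y) ≃
      Quot (GlueRel u v (fun i => Quot.mk (r i) (p i)) (fun i => Quot.mk (r i) (q i))) where
  toFun := Quot.lift (fun x => Quot.mk _ (Sum.map id (Sigma.map id fun i => Quot.mk (r i)) x)) (by
    rintro _ _ (⟨i, ⟨rfl, rfl⟩ | ⟨rfl, rfl⟩⟩ | ⟨i, a, b, h, rfl, rfl⟩)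
    · exact Quot.sound ⟨i, .inl ⟨rfl, rfl⟩⟩
    · exact Quot.sound ⟨i, .inr ⟨rfl, rfl⟩⟩
    · simp [Sigma.map, Quot.sound h])
  invFun := Quot.lift
    (fun
      | .inl x => Quot.mk _ (.inl x)
      | .inr ⟨i, c⟩ => Quot.lift (fun a => Quot.mk _ (.inr ⟨i, a⟩))
          (fun a b h => Quot.sound (.inr ⟨i, a, b, h, rfl, rfl⟩)) c)
    (by
      rintro _ _ ⟨i, ⟨rfl, rfl⟩ | ⟨rfl, rfl⟩⟩
      · exact Quot.sound (.inl ⟨i, .inl ⟨rfl, rfl⟩⟩)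
      · exact Quot.sound (.inl ⟨i, .inr ⟨rfl, rfl⟩⟩))
  left_inv := by rintro ⟨x | ⟨i, a⟩⟩ <;> rfl
  right_inv := by
    rintro ⟨x | ⟨i, c⟩⟩
    · rfl
    · induction c using Quot.ind; rfl

end Gluing

section Signs

variable {R : Type*}

theorem neg_one_pow_add_two_mul [Monoid R] [HasDistribNeg R] (n k : ℕ) :
    (-1 : R) ^ (n + 2 * k) = (-1) ^ n := by
  rw [pow_add, pow_mul, neg_one_sq, one_pow, mul_one]

theorem neg_one_zpow_natCast_sub_natCast [DivisionRing R] (m n : ℕ) :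
    (-1 : R) ^ ((m : ℤ) - n) = (-1) ^ (m + n) := by
  rw [zpow_sub₀ (neg_ne_zero.2 one_ne_zero), zpow_natCast, zpow_natCast, pow_add, div_eq_mul_inv,
    ← inv_pow, inv_neg_one]

end Signs

section Combinatorics

variable {ι : Type*} {κ : ι → Type*} [Fintype ι] [DecidableEq ι] [∀ i, Fintype (κ i)]

def Finset.piEquivSigma [∀ i, DecidableEq (κ i)] : (∀ i, Finset (κ i)) ≃ Finset (Σ i, κ i) where
  toFun g := univ.sigma g
  invFun F i := {k | ⟨i, k⟩ ∈ F}
  left_inv g := by funext i; ext k; simp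
  right_inv F := by ext ⟨i, k⟩; simp

theorem Fintype.sum_pi_eq_sum_finset {R : Type*} [CommSemiring R] (P : ∀ i, κ i → Prop)
    [∀ i, DecidablePred (P i)] (f : Finset ι → R) (w : ∀ i, κ i → R) :
    ∑ g : ∀ i, κ i, f (univ.filter fun i => P i (g i)) * ∏ i, w i (g i) =
      ∑ S : Finset ι, f S *
        ∏ i, if i ∈ S then ∑ k with P i k, w i k else ∑ k with ¬ P i k, w i k := by
  rw [← Finset.sum_fiberwise univ fun g : ∀ i, κ i => univ.filter fun i => P i (g i)]
  refine Finset.sum_congr rfl fun S _ => ?_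
  have hfiber : univ.filter (fun g : ∀ i, κ i => univ.filter (fun i => P i (g i)) = S) =
      Fintype.piFinset fun i => if i ∈ S then univ.filter (P i) else univ.filter fun k => ¬ P i k := by
    ext g
    simp only [Finset.mem_filter, Finset.mem_univ, true_and, Fintype.mem_piFinset, Finset.ext_iff]
    refine forall_congr' fun i => ?_
    split_ifs with hi <;> simp [hi]
  rw [Finset.sum_congr rfl fun g hg => by rw [(Finset.mem_filter.1 hg).2], hfiber,
    ← Finset.mul_sum, ← Finset.prod_univ_sum]
  congr 1
  refine Finset.prod_congr rfl fun i _ => ?_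
  split_ifs <;> rfl

end Combinatorics

theorem exists_sym2_map_eq_iff {E B Y : Type*} (S : Finset E) (ends : E → Sym2 B) (f : B → Y)
    (c d : Y) :
    (∃ e ∈ S, (ends e).map f = s(c, d)) ↔ ∃ x y, (∃ e ∈ S, ends e = s(x, y)) ∧ f x = c ∧ f y = d := by
  constructor
  · rintro ⟨e, he, h⟩
    induction hxy : ends e using Sym2.ind with | _ x y => ?_
    rw [hxy, Sym2.map_mk] at h
    rcases Sym2.eq_iff.1 h with ⟨rfl, rfl⟩ | ⟨rfl, rfl⟩
    · exact ⟨x, y, ⟨e, he, hxy⟩, rfl, rfl⟩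
    · exact ⟨y, x, ⟨e, he, hxy.trans Sym2.eq_swap⟩, rfl, rfl⟩
  · rintro ⟨x, y, ⟨e, he, h⟩, rfl, rfl⟩
    exact ⟨e, he, by rw [h, Sym2.map_mk]⟩

namespace Multigraph

variable (G : Multigraph)

def edgeRel (S : Finset G.E) (x y : G.V) : Prop :=
  ∃ e ∈ S, G.ends e = s(x, y)

def Joins (S : Finset G.E) (x y : G.V) : Prop :=
  Quot.mk (G.edgeRel S) x = Quot.mk (G.edgeRel S) y

theorem mu_eq_card (S : Finset G.E) : G.mu S = Nat.card (Quot (G.edgeRel S)) := rfl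

theorem mu_empty : G.mu ∅ = Nat.card G.V :=
  Quot.card_eq_of_forall_eq (by simp)

theorem mu_le_mu_insert_add_one (S : Finset G.E) (e : G.E) : G.mu S ≤ G.mu (insert e S) + 1 := by
  induction hab : G.ends e using Sym2.ind with | _ a b => ?_
  have hcard : G.mu (insert e S) = Nat.card (Quot fun x y => (x = a ∧ y = b) ∨ G.edgeRel S x y) := by
    refine Quot.card_eq_of_eqvGen ?_ ?_
    · rintro x y ⟨e', he', hxy⟩
      rcases Finset.mem_insert.1 he' with rfl | he'
      · rcases Sym2.eq_iff.1 (hab.symm.trans hxy) with ⟨rfl, rfl⟩ | ⟨rfl, rfl⟩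
        · exact .rel _ _ (.inl ⟨rfl, rfl⟩)
        · exact .symm _ _ (.rel _ _ (.inl ⟨rfl, rfl⟩))
      · exact .rel _ _ (.inr ⟨e', he', hxy⟩)
    · rintro x y (⟨rfl, rfl⟩ | ⟨e', he', hxy⟩)
      · exact .rel _ _ ⟨e, Finset.mem_insert_self e S, hab⟩
      · exact .rel _ _ ⟨e', Finset.mem_insert_of_mem he', hxy⟩
  rw [hcard, mu_eq_card]
  by_cases h : G.Joins S a b
  · rw [Quot.card_or_pair_of_mk_eq h]; omega
  · rw [← Quot.card_or_pair_of_mk_ne h]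

theorem card_le_card_add_mu (S : Finset G.E) : Nat.card G.V ≤ S.card + G.mu S := by
  induction S using Finset.induction_on with
  | empty => simp [mu_empty]
  | insert e S he ih =>
    have := G.mu_le_mu_insert_add_one S e
    rw [Finset.card_insert_of_notMem he]
    omega

theorem betti_add_card (S : Finset G.E) : G.betti S + Nat.card G.V = S.card + G.mu S := by
  have := G.card_le_card_add_mu S
  unfold betti
  omega

noncomputable def stateWeight (t : ℂ) (F : Finset G.E) : ℂ :=
  (-1) ^ (F.card + G.mu Fᶜ) * t ^ G.betti Fᶜ

theorem yamada_eq_sum_stateWeight (A : ℂ) :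
    G.yamada A = ∑ F, G.stateWeight (-A - 2 - A⁻¹) F := rfl

section Identify

variable (u v : G.V) (S : Finset G.E)

theorem mu_identify :
    (G.identify u v).mu S = Nat.card (Quot fun x y => (x = u ∧ y = v) ∨ G.edgeRel S x y) :=
  Nat.card_congr <| Quot.quotEquivQuotOr _ _ _ fun c d => exists_sym2_map_eq_iff S G.ends _ c d

theorem mu_identify_of_joins (h : G.Joins S u v) : (G.identify u v).mu S = G.mu S := by
  rw [mu_identify, Quot.card_or_pair_of_mk_eq h, mu_eq_card]

theorem mu_identify_add_one_of_not_joins (h : ¬ G.Joins S u v) :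
    (G.identify u v).mu S + 1 = G.mu S := by
  rw [mu_identify, Quot.card_or_pair_of_mk_ne h, mu_eq_card]

theorem card_identify_add_one {u v : G.V} (huv : u ≠ v) :
    Nat.card (G.identify u v).V + 1 = Nat.card G.V :=
  Quot.card_pair_add_one huv

variable {u v}

theorem betti_identify_of_joins (huv : u ≠ v) (h : G.Joins S u v) :
    (G.identify u v).betti S = G.betti S + 1 := by
  have : (G.identify u v).betti S + Nat.card (G.identify u v).V = S.card + (G.identify u v).mu S :=
    (G.identify u v).betti_add_card S
  have := G.betti_add_card S
  have := G.card_identify_add_one huv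
  have := G.mu_identify_of_joins u v S h
  omega

theorem betti_identify_of_not_joins (huv : u ≠ v) (h : ¬ G.Joins S u v) :
    (G.identify u v).betti S = G.betti S := by
  have : (G.identify u v).betti S + Nat.card (G.identify u v).V = S.card + (G.identify u v).mu S :=
    (G.identify u v).betti_add_card S
  have := G.betti_add_card S
  have := G.card_identify_add_one huv
  have := G.mu_identify_add_one_of_not_joins u v S h
  omega

variable (t : ℂ)

-- Complementing in `G.E` rather than in the defeq `(G.identify u v).E` lets lemmas about `G` apply.
theorem stateWeight_identify (F : Finset G.E) : (G.identify u v).stateWeight t F =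
    (-1) ^ (F.card + (G.identify u v).mu (Fᶜ : Finset G.E)) *
      t ^ (G.identify u v).betti (Fᶜ : Finset G.E) := rfl

variable {F : Finset G.E}

theorem stateWeight_identify_of_joins (huv : u ≠ v) (h : G.Joins Fᶜ u v) :
    (G.identify u v).stateWeight t F = t * G.stateWeight t F := by
  rw [stateWeight_identify, G.mu_identify_of_joins u v _ h, G.betti_identify_of_joins _ huv h,
    stateWeight, pow_succ]
  ring

theorem stateWeight_identify_of_not_joins (huv : u ≠ v) (h : ¬ G.Joins Fᶜ u v) :
    (G.identify u v).stateWeight t F = -G.stateWeight t F := by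
  rw [stateWeight_identify, G.betti_identify_of_not_joins _ huv h, stateWeight,
    ← G.mu_identify_add_one_of_not_joins u v _ h, ← add_assoc, pow_succ]
  ring

end Identify

section Split

variable (x y : G.V) (t : ℂ)

open Classical in
noncomputable def joinedWeight : ℂ :=
  ∑ F with G.Joins Fᶜ x y, G.stateWeight t F

open Classical in
noncomputable def separatedWeight : ℂ :=
  ∑ F with ¬ G.Joins Fᶜ x y, G.stateWeight t F

open Classical in
theorem sum_stateWeight_eq :
    ∑ F, G.stateWeight t F = G.joinedWeight x y t + G.separatedWeight x y t :=
  (Finset.sum_filter_add_sum_filter_not _ _ _).symm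

open Classical in
theorem sum_stateWeight_identify {x y : G.V} (hxy : x ≠ y) :
    ∑ F, (G.identify x y).stateWeight t F = t * G.joinedWeight x y t - G.separatedWeight x y t :=
  calc ∑ F, (G.identify x y).stateWeight t F
      = ∑ F : Finset G.E, if G.Joins Fᶜ x y then t * G.stateWeight t F else -G.stateWeight t F :=
        Finset.sum_congr rfl fun F _ => by
          split_ifs with h
          exacts [G.stateWeight_identify_of_joins t hxy h,
            G.stateWeight_identify_of_not_joins t hxy h]
    _ = t * G.joinedWeight x y t - G.separatedWeight x y t := by
      rw [Finset.sum_ite, ← Finset.mul_sum, Finset.sum_neg_distrib, ← sub_eq_add_neg]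
      rfl

variable {x y} {A σ : ℂ}

theorem yamada_add_yamada_identify (hxy : x ≠ y) (hσ : σ = A + 1 + A⁻¹) :
    G.yamada A + (G.identify x y).yamada A = -σ * G.joinedWeight x y (-A - 2 - A⁻¹) := by
  rw [yamada_eq_sum_stateWeight, yamada_eq_sum_stateWeight, G.sum_stateWeight_eq x y,
    G.sum_stateWeight_identify _ hxy, hσ]
  ring

theorem joinedWeight_eq (hxy : x ≠ y) (hσ : σ = A + 1 + A⁻¹) (hσ0 : σ ≠ 0) :
    G.joinedWeight x y (-A - 2 - A⁻¹) = -((G.yamada A + (G.identify x y).yamada A) / σ) := by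
  rw [G.yamada_add_yamada_identify hxy hσ]
  field_simp

theorem separatedWeight_eq (hxy : x ≠ y) (hσ : σ = A + 1 + A⁻¹) (hσ0 : σ ≠ 0) :
    G.separatedWeight x y (-A - 2 - A⁻¹) =
      ((σ + 1) * G.yamada A + (G.identify x y).yamada A) / σ := by
  rw [add_one_mul, add_assoc, G.yamada_add_yamada_identify hxy hσ, yamada_eq_sum_stateWeight,
    G.sum_stateWeight_eq x y]
  field_simp
  ring

end Split

section ReplaceEdges

variable (K : G.E → Multigraph) (u v : G.E → G.V) (ub vb : ∀ a, (K a).V)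

theorem card_replaceEdges (hne : ∀ a, ub a ≠ vb a) :
    Nat.card (G.replaceEdges K u v ub vb).V + 2 * Fintype.card G.E =
      Nat.card G.V + ∑ a, Nat.card (K a).V := by
  have h := card_quot_glueRel u v ub vb
  rw [Quot.card_eq_of_forall_eq (r := PinchRel u v ub vb) fun x y ⟨a, h, _⟩ => (hne a h).elim] at h
  simp only [hne, if_false, add_zero] at h
  exact h

open Classical in
noncomputable def joinedEdges (R : ∀ a, Finset (K a).E) : Finset G.E :=
  {a | (K a).Joins (R a) (ub a) (vb a)}

theorem mu_replaceEdges_eq_card (R : ∀ a, Finset (K a).E) :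
    (G.replaceEdges K u v ub vb).mu (univ.sigma R) =
      Nat.card (Quot (GlueRel u v (fun a => Quot.mk ((K a).edgeRel (R a)) (ub a))
        (fun a => Quot.mk ((K a).edgeRel (R a)) (vb a)))) := by
  refine (Nat.card_congr (Quot.quotEquivQuotOr _ _ _ fun c d => ?_)).trans
    (Nat.card_congr (glueQuotEquiv u v ub vb fun a => (K a).edgeRel (R a)))
  constructor
  · rintro ⟨⟨a, e⟩, he, h⟩
    obtain ⟨x, y, hxy, rfl, rfl⟩ :=
      (exists_sym2_map_eq_iff (R a) (K a).ends _ c d).1 ⟨e, (Finset.mem_sigma.1 he).2, h⟩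
    exact ⟨_, _, ⟨a, x, y, hxy, rfl, rfl⟩, rfl, rfl⟩
  · rintro ⟨_, _, ⟨a, x, y, hxy, rfl, rfl⟩, rfl, rfl⟩
    obtain ⟨e, he, h⟩ := (exists_sym2_map_eq_iff (R a) (K a).ends
      (fun x => Quot.mk (GlueRel u v ub vb) (.inr ⟨a, x⟩)) _ _).2 ⟨x, y, hxy, rfl, rfl⟩
    exact ⟨⟨a, e⟩, Finset.mem_sigma.2 ⟨Finset.mem_univ a, he⟩, h⟩

open Classical in
theorem mu_replaceEdges (hends : ∀ a, G.ends a = s(u a, v a)) (R : ∀ a, Finset (K a).E) :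
    (G.replaceEdges K u v ub vb).mu (univ.sigma R) + 2 * Fintype.card G.E =
      G.mu (G.joinedEdges K ub vb R) + (G.joinedEdges K ub vb R).card + ∑ a, (K a).mu (R a) := by
  have hpinch : PinchRel u v (fun a => Quot.mk ((K a).edgeRel (R a)) (ub a))
      (fun a => Quot.mk ((K a).edgeRel (R a)) (vb a)) = G.edgeRel (G.joinedEdges K ub vb R) := by
    funext x y
    simp only [PinchRel, edgeRel, joinedEdges, Finset.mem_filter, Finset.mem_univ, true_and, hends]
    rfl
  have hcard : (∑ a, if (K a).Joins (R a) (ub a) (vb a) then 1 else 0) =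
      (G.joinedEdges K ub vb R).card := by
    rw [Finset.sum_boole, joinedEdges, Nat.cast_id]
  rw [mu_replaceEdges_eq_card, card_quot_glueRel, hpinch, ← mu_eq_card, Finset.sum_add_distrib]
  change _ + (∑ a, (K a).mu (R a) + ∑ a, if (K a).Joins (R a) (ub a) (vb a) then 1 else 0) = _
  rw [hcard]
  ring

theorem betti_replaceEdges (hends : ∀ a, G.ends a = s(u a, v a)) (hne : ∀ a, ub a ≠ vb a)
    (R : ∀ a, Finset (K a).E) :
    (G.replaceEdges K u v ub vb).betti (univ.sigma R) =
      G.betti (G.joinedEdges K ub vb R) + ∑ a, (K a).betti (R a) := by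
  have hb : (G.replaceEdges K u v ub vb).betti (univ.sigma R) +
      Nat.card (G.replaceEdges K u v ub vb).V =
        ∑ a, (R a).card + (G.replaceEdges K u v ub vb).mu (univ.sigma R) := by
    rw [← Finset.card_sigma]
    exact betti_add_card _ _
  have hbK : ∑ a, (K a).betti (R a) + ∑ a, Nat.card (K a).V =
      ∑ a, (R a).card + ∑ a, (K a).mu (R a) := by
    simp only [← Finset.sum_add_distrib, betti_add_card]
  have := G.mu_replaceEdges K u v ub vb hends R
  have := G.card_replaceEdges K u v ub vb hne
  have := G.betti_add_card (G.joinedEdges K ub vb R)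
  omega

theorem stateWeight_replaceEdges (hends : ∀ a, G.ends a = s(u a, v a)) (hne : ∀ a, ub a ≠ vb a)
    (t : ℂ) (g : ∀ a, Finset (K a).E) :
    (G.replaceEdges K u v ub vb).stateWeight t (univ.sigma g) =
      (-1) ^ (G.mu (G.joinedEdges K ub vb fun a => (g a)ᶜ) +
          (G.joinedEdges K ub vb fun a => (g a)ᶜ).card) *
        t ^ G.betti (G.joinedEdges K ub vb fun a => (g a)ᶜ) * ∏ a, (K a).stateWeight t (g a) := by
  have hcompl : (univ.sigma g)ᶜ = univ.sigma fun a => (g a)ᶜ := by ext ⟨a, e⟩; simp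
  -- `stateWeight` complements in `(G.replaceEdges ..).E`, only defeq to `Σ a, (K a).E`.
  have hweight : (G.replaceEdges K u v ub vb).stateWeight t (univ.sigma g) =
      (-1) ^ ((univ.sigma g).card + (G.replaceEdges K u v ub vb).mu (univ.sigma fun a => (g a)ᶜ)) *
        t ^ (G.replaceEdges K u v ub vb).betti (univ.sigma fun a => (g a)ᶜ) := by
    rw [← hcompl]; rfl
  have hmu := G.mu_replaceEdges K u v ub vb hends fun a => (g a)ᶜ
  have hsign : (-1 : ℂ) ^ ((univ.sigma g).card +
      (G.replaceEdges K u v ub vb).mu (univ.sigma fun a => (g a)ᶜ)) =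
        (-1) ^ (G.mu (G.joinedEdges K ub vb fun a => (g a)ᶜ) +
          (G.joinedEdges K ub vb fun a => (g a)ᶜ).card +
            ∑ a, ((g a).card + (K a).mu (g a)ᶜ)) := by
    rw [← neg_one_pow_add_two_mul _ (Fintype.card G.E), Finset.card_sigma, Finset.sum_add_distrib]
    congr 1
    omega
  rw [hweight, hsign, G.betti_replaceEdges K u v ub vb hends hne]
  simp only [stateWeight, Finset.prod_mul_distrib, Finset.prod_pow_eq_pow_sum,
    Finset.sum_add_distrib, pow_add]
  ring

open Classical in
theorem yamada_replaceEdges (hends : ∀ a, G.ends a = s(u a, v a)) (hne : ∀ a, ub a ≠ vb a)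
    (A : ℂ) :
    (G.replaceEdges K u v ub vb).yamada A =
      ∑ S : Finset G.E, (-1) ^ (G.mu S + S.card) * (-A - 2 - A⁻¹) ^ G.betti S *
        ∏ a, if a ∈ S then (K a).joinedWeight (ub a) (vb a) (-A - 2 - A⁻¹)
          else (K a).separatedWeight (ub a) (vb a) (-A - 2 - A⁻¹) :=
  calc (G.replaceEdges K u v ub vb).yamada A
      = ∑ F : Finset (Σ a, (K a).E), (G.replaceEdges K u v ub vb).stateWeight (-A - 2 - A⁻¹) F :=
        rfl
    _ = ∑ g : ∀ a, Finset (K a).E,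
          (G.replaceEdges K u v ub vb).stateWeight (-A - 2 - A⁻¹) (univ.sigma g) :=
        (Finset.piEquivSigma.sum_comp _).symm
    _ = _ := by
      simp only [G.stateWeight_replaceEdges K u v ub vb hends hne]
      exact Fintype.sum_pi_eq_sum_finset (fun a F => (K a).Joins Fᶜ (ub a) (vb a))
        (fun S => (-1) ^ (G.mu S + S.card) * (-A - 2 - A⁻¹) ^ G.betti S)
        fun a => (K a).stateWeight (-A - 2 - A⁻¹)

end ReplaceEdges

theorem chain_eq_sum {R : Type*} [CommRing R] (G : Multigraph) (ℓ : G.E → R) (w : R) :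
    G.chain ℓ w = ∑ S, (1 - w) ^ G.betti S * ∏ a ∈ Sᶜ, (ℓ a - 1) := by
  unfold chain
  simp_rw [Finset.sum_mul]
  rw [Finset.sum_comm' (t' := univ) (s' := fun S => Sᶜ.powerset) fun Y S => by
    simp [Finset.subset_compl_comm]]
  refine Finset.sum_congr rfl fun S _ => ?_
  simp_rw [sub_eq_add_neg (ℓ _), Finset.prod_add, Finset.mul_sum]
  refine Finset.sum_congr rfl fun Y hY => ?_
  have hSY : S ⊆ Yᶜ := Finset.subset_compl_comm.1 (Finset.mem_powerset.1 hY)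
  have hcard : Yᶜ.card - S.card = (Sᶜ \ Y).card := by
    rw [← Finset.card_sdiff_of_subset hSY]
    congr 1
    ext a
    simp only [Finset.mem_sdiff, Finset.mem_compl]
    tauto
  rw [hcard, Finset.prod_const]
  ring

theorem mul_chain_eq_sum (G : Multigraph) (α β γ : G.E → ℂ) (hβ0 : ∀ a, β a ≠ 0)
    (hγ : ∀ a, γ a = 1 - α a / β a) (t : ℂ) :
    (-1 : ℂ) ^ ((Nat.card G.V : ℤ) - (Fintype.card G.E : ℤ)) * (∏ a, β a) * G.chain γ (1 + t) =
      ∑ S, (-1) ^ (G.mu S + S.card) * t ^ G.betti S * ∏ a, if a ∈ S then -β a else α a := by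
  have hβγ : ∀ a, β a * (γ a - 1) = -α a := fun a => by
    rw [hγ a]
    field_simp [hβ0 a]
    ring
  rw [chain_eq_sum, Finset.mul_sum, neg_one_zpow_natCast_sub_natCast]
  refine Finset.sum_congr rfl fun S _ => ?_
  have hsign : (-1 : ℂ) ^ (Nat.card G.V + Fintype.card G.E) * (-1) ^ G.betti S * (-1) ^ Sᶜ.card =
      (-1) ^ G.mu S := by
    have := G.betti_add_card S
    have := Finset.card_compl_add_card S
    rw [← pow_add, ← pow_add, ← neg_one_pow_add_two_mul (G.mu S) (Fintype.card G.E)]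
    congr 1
    omega
  have hcompl : (∏ a ∈ Sᶜ, β a) * ∏ a ∈ Sᶜ, (γ a - 1) = (-1) ^ Sᶜ.card * ∏ a ∈ Sᶜ, α a := by
    rw [← Finset.prod_mul_distrib, Finset.prod_congr rfl fun a _ => hβγ a, Finset.prod_neg]
  have hite : (∏ a, if a ∈ S then -β a else α a) = (∏ a ∈ S, -β a) * ∏ a ∈ Sᶜ, α a := by
    rw [Finset.prod_ite]
    congr 2 <;> ext <;> simp
  have hS : (-1 : ℂ) ^ (G.mu S + S.card) * (-1) ^ S.card = (-1) ^ G.mu S := by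
    rw [← pow_add, add_assoc, ← two_mul, neg_one_pow_add_two_mul]
  rw [hite, Finset.prod_neg, ← Finset.prod_mul_prod_compl S β, sub_add_cancel_left, neg_pow t]
  linear_combination ((-1 : ℂ) ^ (Nat.card G.V + Fintype.card G.E) * (-1) ^ G.betti S *
      (∏ a ∈ S, β a) * t ^ G.betti S) * hcompl +
    ((∏ a ∈ S, β a) * t ^ G.betti S * ∏ a ∈ Sᶜ, α a) * (hsign - hS)

end Multigraph

theorem yamada_replaceEdges_eq_chain_general (G : Multigraph)
    (K : G.E → Multigraph)
    (u v : G.E → G.V) (hends : ∀ a, G.ends a = s(u a, v a))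
    (ub vb : (a : G.E) → (K a).V) (hubvb : ∀ a, ub a ≠ vb a)
    (A : ℂ) (σ : ℂ) (hσ : σ = A + 1 + A⁻¹) (hσ0 : σ ≠ 0)
    (α β γ : G.E → ℂ)
    (hα : ∀ a, α a = ((σ + 1) * (K a).yamada A + ((K a).identify (ub a) (vb a)).yamada A) / σ)
    (hβ : ∀ a, β a = ((K a).yamada A + ((K a).identify (ub a) (vb a)).yamada A) / σ)
    (hβ0 : ∀ a, β a ≠ 0)
    (hγ : ∀ a, γ a = 1 - α a / β a) :
    (G.replaceEdges K u v ub vb).yamada A =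
      (-1 : ℂ) ^ ((Nat.card G.V : ℤ) - (Fintype.card G.E : ℤ)) *
        (∏ a : G.E, β a) * G.chain γ (-σ) := by
  have hjoined : ∀ a, (K a).joinedWeight (ub a) (vb a) (-A - 2 - A⁻¹) = -β a := fun a => by
    rw [hβ a, (K a).joinedWeight_eq (hubvb a) hσ hσ0]
  have hseparated : ∀ a, (K a).separatedWeight (ub a) (vb a) (-A - 2 - A⁻¹) = α a := fun a => by
    rw [hα a, (K a).separatedWeight_eq (hubvb a) hσ hσ0]
  have hw : -σ = 1 + (-A - 2 - A⁻¹) := by rw [hσ]; ring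
  rw [G.yamada_replaceEdges K u v ub vb hends hubvb, hw, G.mul_chain_eq_sum α β γ hβ0 hγ]
  simp only [hjoined, hseparated]

/-- Let `G` be a connected multigraph with `p` vertices and `q` edges,
and for each edge `a` (with endpoints `u a`, `v a`) let `K a` be a connected
multigraph with distinguished distinct vertices `ub a ≠ vb a`; let `G̃` be obtained
from `G` by replacing each edge `a` by `K a`, and let `K′_a` be `K a` with `ub a`
and `vb a` identified.  Fix a nonzero `A` with `σ = A + 1 + A⁻¹ ≠ 0` and set
`α_a = ((σ+1)H(K_a) + H(K′_a))/σ`, `β_a = (H(K_a) + H(K′_a))/σ` (assumed nonzero),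
`γ_a = 1 − α_a/β_a`.  Then `H(G̃)(A) = (−1)^{p−q} · (Π_a β_a) · Ch(G)`, where `Ch(G)`
is the chain polynomial of `G` with edge `a` labelled `γ_a`, evaluated at `w = −σ`. -/
theorem yamada_replaceEdges_eq_chain (G : Multigraph) (hG : G.Connected)
    (K : G.E → Multigraph) (hK : ∀ a, (K a).Connected)
    (u v : G.E → G.V) (hends : ∀ a, G.ends a = s(u a, v a))
    (ub vb : (a : G.E) → (K a).V) (hubvb : ∀ a, ub a ≠ vb a)
    (A : ℂ) (hA : A ≠ 0) (σ : ℂ) (hσ : σ = A + 1 + A⁻¹) (hσ0 : σ ≠ 0)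
    (α β γ : G.E → ℂ)
    (hα : ∀ a, α a = ((σ + 1) * (K a).yamada A + ((K a).identify (ub a) (vb a)).yamada A) / σ)
    (hβ : ∀ a, β a = ((K a).yamada A + ((K a).identify (ub a) (vb a)).yamada A) / σ)
    (hβ0 : ∀ a, β a ≠ 0)
    (hγ : ∀ a, γ a = 1 - α a / β a) :
    (G.replaceEdges K u v ub vb).yamada A =
      (-1 : ℂ) ^ ((Nat.card G.V : ℤ) - (Fintype.card G.E : ℤ)) *
        (∏ a : G.E, β a) * G.chain γ (-σ) :=
  yamada_replaceEdges_eq_chain_general G K u v hends ub vb hubvb A σ hσ hσ0 α β γ hα hβ hβ0 hγ
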